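/- Fix λ ≠ 0. A continuously differentiable covector field A : ℝ⁴ → ℝ⁴ satisfies the invariance conditions L_ξA = 0 for ξ = e₁, ξ = e₃ and ξ = e₁₃ + λ(e₂+e₄) = (x³, λ, −x¹, λ) if and only if there exist continuously differentiable functions C₁, C₂, f, g : ℝ → ℝ such that, writing u = x² + x⁴ and v = x² − x⁴, for all x: A₁(x) = C₁(v)·sin(u/(2λ)) + C₂(v)·cos(u/(2λ)), A₃(x) = C₁(v)·cos(u/(2λ)) − C₂(v)·sin(u/(2λ)), A₂(x) = f(v) and A₄(x) = g(v). (This is the class P₍₃,₄₎, elliptic helices with an isotropic axis together with translations in the plane Ox¹x³.) -/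

import Mathlib

open Real

/-- Partial derivative of a scalar function on ℝ⁴ in the j-th coordinate direction. -/
noncomputable def pd (j : Fin 4) (f : (Fin 4 → ℝ) → ℝ) (x : Fin 4 → ℝ) : ℝ :=
  fderiv ℝ f x (Pi.single j 1)

/-- The i-th component of the Lie derivative of the covector field A along
the vector field ξ at the point x:  Σ_j ξ^j ∂_j A_i + Σ_j A_j ∂_i ξ^j. -/
noncomputable def lieCov (ξ A : (Fin 4 → ℝ) → Fin 4 → ℝ) (x : Fin 4 → ℝ) (i : Fin 4) : ℝ :=
  (∑ j : Fin 4, ξ x j * pd j (fun y => A y i) x)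
    + ∑ j : Fin 4, A x j * pd i (fun y => ξ y j) x

/-- Invariance condition L_ξ A = 0 on all of ℝ⁴. -/
def PInvariant (ξ A : (Fin 4 → ℝ) → Fin 4 → ℝ) : Prop :=
  ∀ x i, lieCov ξ A x i = 0

/-- Invariance condition L_ξ A = 0 on a set M. -/
def PInvariantOn (ξ A : (Fin 4 → ℝ) → Fin 4 → ℝ) (M : Set (Fin 4 → ℝ)) : Prop :=
  ∀ x ∈ M, ∀ i, lieCov ξ A x i = 0

def e1 : (Fin 4 → ℝ) → Fin 4 → ℝ := fun _ => ![1, 0, 0, 0]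
def e2 : (Fin 4 → ℝ) → Fin 4 → ℝ := fun _ => ![0, 1, 0, 0]
def e3 : (Fin 4 → ℝ) → Fin 4 → ℝ := fun _ => ![0, 0, 1, 0]
def e4 : (Fin 4 → ℝ) → Fin 4 → ℝ := fun _ => ![0, 0, 0, 1]
def e12 : (Fin 4 → ℝ) → Fin 4 → ℝ := fun x => ![-x 1, x 0, 0, 0]
def e13 : (Fin 4 → ℝ) → Fin 4 → ℝ := fun x => ![x 2, 0, -x 0, 0]
def e23 : (Fin 4 → ℝ) → Fin 4 → ℝ := fun x => ![0, -x 2, x 1, 0]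
def e14 : (Fin 4 → ℝ) → Fin 4 → ℝ := fun x => ![x 3, 0, 0, x 0]
def e24 : (Fin 4 → ℝ) → Fin 4 → ℝ := fun x => ![0, x 3, 0, x 1]
def e34 : (Fin 4 → ℝ) → Fin 4 → ℝ := fun x => ![0, 0, x 3, x 2]

/- ### Auxiliary lemmas -/

lemma clm_apply_sum' (φ : (Fin 4 → ℝ) →L[ℝ] ℝ) (w : Fin 4 → ℝ) :
    φ w = ∑ j, w j * φ (Pi.single j 1) := by
  have hw : w = ∑ j, w j • (Pi.single j 1 : Fin 4 → ℝ) := by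
    funext k
    simp [Finset.sum_apply, Pi.single_apply]
  conv_lhs => rw [hw]
  simp [map_sum]

lemma pd_const' (i : Fin 4) (c : ℝ) (x : Fin 4 → ℝ) : pd i (fun _ => c) x = 0 := by
  simp [pd]

lemma pd_proj' (k i : Fin 4) (x : Fin 4 → ℝ) :
    pd i (fun y => y k) x = if k = i then 1 else 0 := by
  have h : HasFDerivAt (fun y : Fin 4 → ℝ => y k)
      (ContinuousLinearMap.proj k : (Fin 4 → ℝ) →L[ℝ] ℝ) x :=
    (ContinuousLinearMap.proj k : (Fin 4 → ℝ) →L[ℝ] ℝ).hasFDerivAt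
  rw [pd, h.fderiv]
  simp [Pi.single_apply]

lemma pd_neg_proj' (k i : Fin 4) (x : Fin 4 → ℝ) :
    pd i (fun y => -y k) x = -(if k = i then 1 else 0) := by
  rw [← pd_proj' k i x, pd, pd, fderiv_fun_neg]
  simp

lemma hasDerivAt_line' (f : (Fin 4 → ℝ) → ℝ) (hf : Differentiable ℝ f)
    (x w : Fin 4 → ℝ) (t : ℝ) :
    HasDerivAt (fun s => f (x + s • w))
      (∑ j, w j * pd j f (x + t • w)) t := by
  have hline : HasDerivAt (fun s : ℝ => x + s • w) w t := by
    have h1 : HasDerivAt (fun s : ℝ => s • w) ((1:ℝ) • w) t :=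
      HasDerivAt.smul_const (hasDerivAt_id t) w
    simpa using h1.const_add x
  have := ((hf (x + t • w)).hasFDerivAt).comp_hasDerivAt t hline
  simp only [pd]; rw [← clm_apply_sum']; exact this

lemma const_along' (f : (Fin 4 → ℝ) → ℝ) (hf : Differentiable ℝ f)
    (w : Fin 4 → ℝ) (hw : ∀ y, ∑ j, w j * pd j f y = 0)
    (x : Fin 4 → ℝ) (t : ℝ) : f (x + t • w) = f x := by
  have hdiff : Differentiable ℝ (fun s : ℝ => f (x + s • w)) := fun s =>
    (hasDerivAt_line' f hf x w s).differentiableAt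
  have hderiv : ∀ s : ℝ, deriv (fun s : ℝ => f (x + s • w)) s = 0 := fun s => by
    rw [(hasDerivAt_line' f hf x w s).deriv, hw]
  have := is_const_of_deriv_eq_zero hdiff hderiv t 0
  simpa using this

lemma hasFDerivAt_vpart (h : ℝ → ℝ) (hh : Differentiable ℝ h) (y : Fin 4 → ℝ) :
    HasFDerivAt (fun y : Fin 4 → ℝ => h (y 1 - y 3))
      (deriv h (y 1 - y 3) •
        ((ContinuousLinearMap.proj 1 : (Fin 4 → ℝ) →L[ℝ] ℝ)
          - ContinuousLinearMap.proj 3)) y := by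
  have g1 : HasFDerivAt (fun y : Fin 4 → ℝ => y 1 - y 3)
      ((ContinuousLinearMap.proj 1 : (Fin 4 → ℝ) →L[ℝ] ℝ)
        - ContinuousLinearMap.proj 3) y :=
    ((ContinuousLinearMap.proj 1 : (Fin 4 → ℝ) →L[ℝ] ℝ).hasFDerivAt).sub
      ((ContinuousLinearMap.proj 3 : (Fin 4 → ℝ) →L[ℝ] ℝ).hasFDerivAt)
  exact ((hh (y 1 - y 3)).hasDerivAt).comp_hasFDerivAt y g1

lemma hasFDerivAt_upart (k : ℝ → ℝ) (hk : Differentiable ℝ k) (c : ℝ) (y : Fin 4 → ℝ) :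
    HasFDerivAt (fun y : Fin 4 → ℝ => k ((y 1 + y 3) / c))
      ((deriv k ((y 1 + y 3) / c) * (1 / c)) •
        ((ContinuousLinearMap.proj 1 : (Fin 4 → ℝ) →L[ℝ] ℝ)
          + ContinuousLinearMap.proj 3)) y := by
  have g2 : HasFDerivAt (fun y : Fin 4 → ℝ => y 1 + y 3)
      ((ContinuousLinearMap.proj 1 : (Fin 4 → ℝ) →L[ℝ] ℝ)
        + ContinuousLinearMap.proj 3) y :=
    ((ContinuousLinearMap.proj 1 : (Fin 4 → ℝ) →L[ℝ] ℝ).hasFDerivAt).add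
      ((ContinuousLinearMap.proj 3 : (Fin 4 → ℝ) →L[ℝ] ℝ).hasFDerivAt)
  have hd : HasDerivAt (fun t => k (t / c)) (deriv k ((y 1 + y 3) / c) * (1 / c))
      (y 1 + y 3) := by
    have h1 : HasDerivAt (fun t : ℝ => t / c) (1 / c) (y 1 + y 3) := by
      simpa using (hasDerivAt_id (y 1 + y 3)).div_const c
    exact ((hk ((y 1 + y 3) / c)).hasDerivAt).comp (y 1 + y 3) h1
  have := hd.comp_hasFDerivAt y g2; exact this

lemma pd_shape (h k : ℝ → ℝ) (hh : Differentiable ℝ h) (hk : Differentiable ℝ k)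
    (c : ℝ) (j : Fin 4) (y : Fin 4 → ℝ) :
    pd j (fun y => h (y 1 - y 3) * k ((y 1 + y 3) / c)) y
      = ((if (1:Fin 4) = j then 1 else 0) - (if (3:Fin 4) = j then 1 else 0))
          * deriv h (y 1 - y 3) * k ((y 1 + y 3) / c)
        + ((if (1:Fin 4) = j then 1 else 0) + (if (3:Fin 4) = j then 1 else 0))
          * h (y 1 - y 3) * (deriv k ((y 1 + y 3) / c) * (1 / c)) := by
  have H := (hasFDerivAt_vpart h hh y).fun_mul (hasFDerivAt_upart k hk c y)
  rw [pd, H.fderiv]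
  simp [Pi.single_apply, ContinuousLinearMap.smul_apply, ContinuousLinearMap.sub_apply,
    ContinuousLinearMap.add_apply, ContinuousLinearMap.proj_apply, smul_eq_mul]
  split_ifs <;> ring

lemma pd_vshape (h : ℝ → ℝ) (hh : Differentiable ℝ h) (j : Fin 4) (y : Fin 4 → ℝ) :
    pd j (fun y => h (y 1 - y 3)) y
      = ((if (1:Fin 4) = j then 1 else 0) - (if (3:Fin 4) = j then 1 else 0))
          * deriv h (y 1 - y 3) := by
  have H := hasFDerivAt_vpart h hh y
  rw [pd, H.fderiv]
  simp [Pi.single_apply, smul_eq_mul]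
  split_ifs <;> ring

lemma pd_add' (F G : (Fin 4 → ℝ) → ℝ) (j : Fin 4) (x : Fin 4 → ℝ)
    (hF : DifferentiableAt ℝ F x) (hG : DifferentiableAt ℝ G x) :
    pd j (fun y => F y + G y) x = pd j F x + pd j G x := by
  simp [pd, fderiv_fun_add hF hG]

lemma pd_sub' (F G : (Fin 4 → ℝ) → ℝ) (j : Fin 4) (x : Fin 4 → ℝ)
    (hF : DifferentiableAt ℝ F x) (hG : DifferentiableAt ℝ G x) :
    pd j (fun y => F y - G y) x = pd j F x - pd j G x := by
  simp [pd, fderiv_fun_sub hF hG]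


/-- Class P_{3,4}: elliptic helices with an isotropic axis and translations in Ox¹x³. -/
theorem class_P34 (l : ℝ) (hl : l ≠ 0)
    (A : (Fin 4 → ℝ) → Fin 4 → ℝ) (hA : ContDiff ℝ 1 A) :
    (PInvariant e1 A ∧ PInvariant e3 A ∧
      PInvariant (fun x => ![x 2, l, -x 0, l]) A) ↔
      ∃ C1 C2 f g : ℝ → ℝ, ContDiff ℝ 1 C1 ∧ ContDiff ℝ 1 C2 ∧
        ContDiff ℝ 1 f ∧ ContDiff ℝ 1 g ∧
        ∀ x, A x 0 = C1 (x 1 - x 3) * sin ((x 1 + x 3) / (2 * l))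
              + C2 (x 1 - x 3) * cos ((x 1 + x 3) / (2 * l)) ∧
          A x 2 = C1 (x 1 - x 3) * cos ((x 1 + x 3) / (2 * l))
              - C2 (x 1 - x 3) * sin ((x 1 + x 3) / (2 * l)) ∧
          A x 1 = f (x 1 - x 3) ∧ A x 3 = g (x 1 - x 3) := by
  constructor
  · rintro ⟨H1, H3, HX⟩
    have hdA : Differentiable ℝ A := hA.differentiable one_ne_zero
    have hdAi : ∀ i, Differentiable ℝ (fun y => A y i) := fun i =>
      (differentiable_pi.mp hdA) i
    have h0 : ∀ x i, pd 0 (fun y => A y i) x = 0 := by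
      intro x i
      have h := H1 x i
      simp only [lieCov, e1, Fin.sum_univ_four, Matrix.cons_val_zero, Matrix.cons_val_one,
        Matrix.head_cons, Matrix.cons_val_two, Matrix.tail_cons, Matrix.cons_val_three,
        pd_const'] at h
      linarith
    have h2 : ∀ x i, pd 2 (fun y => A y i) x = 0 := by
      intro x i
      have h := H3 x i
      simp only [lieCov, e3, Fin.sum_univ_four, Matrix.cons_val_zero, Matrix.cons_val_one,
        Matrix.head_cons, Matrix.cons_val_two, Matrix.tail_cons, Matrix.cons_val_three,
        pd_const'] at h
      linarith
    have hXk : ∀ x i, l * pd 1 (fun y => A y i) x + l * pd 3 (fun y => A y i) x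
        + (if i = 2 then A x 0 else 0) - (if i = 0 then A x 2 else 0) = 0 := by
      intro x i
      have h := HX x i
      simp only [lieCov, Fin.sum_univ_four, Matrix.cons_val_zero, Matrix.cons_val_one,
        Matrix.head_cons, Matrix.cons_val_two, Matrix.tail_cons, Matrix.cons_val_three,
        pd_const', pd_proj', pd_neg_proj', h0, h2] at h
      fin_cases i <;> simp at h ⊢ <;> linarith
    have key0 : ∀ x, l * pd 1 (fun y => A y 0) x + l * pd 3 (fun y => A y 0) x = A x 2 := by
      intro x; have := hXk x 0; simp at this; linarith
    have key2 : ∀ x, l * pd 1 (fun y => A y 2) x + l * pd 3 (fun y => A y 2) x = -A x 0 := by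
      intro x; have := hXk x 2; simp at this; linarith
    have key1 : ∀ x, pd 1 (fun y => A y 1) x + pd 3 (fun y => A y 1) x = 0 := by
      intro x; have := hXk x 1; simp at this
      have h' : l * (pd 1 (fun y => A y 1) x + pd 3 (fun y => A y 1) x) = 0 := by linarith
      rcases mul_eq_zero.mp h' with h | h
      · exact absurd h hl
      · exact h
    have key3 : ∀ x, pd 1 (fun y => A y 3) x + pd 3 (fun y => A y 3) x = 0 := by
      intro x; have := hXk x 3; simp at this
      have h' : l * (pd 1 (fun y => A y 3) x + pd 3 (fun y => A y 3) x) = 0 := by linarith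
      rcases mul_eq_zero.mp h' with h | h
      · exact absurd h hl
      · exact h
    -- translations in coordinates 0 and 2
    have trans : ∀ (x : Fin 4 → ℝ) i, A x i = A ![0, x 1, 0, x 3] i := by
      intro x i
      have hw0 : ∀ y, ∑ j, (![1,0,0,0] : Fin 4 → ℝ) j * pd j (fun y => A y i) y = 0 := by
        intro y; rw [Fin.sum_univ_four]; simp [h0]
      have hw2 : ∀ y, ∑ j, (![0,0,1,0] : Fin 4 → ℝ) j * pd j (fun y => A y i) y = 0 := by
        intro y; rw [Fin.sum_univ_four]; simp [h2]
      have hx : x = ((![0, x 1, 0, x 3] : Fin 4 → ℝ) + x 2 • ![0,0,1,0]) + x 0 • ![1,0,0,0] := by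
        funext j; fin_cases j <;> simp
      calc A x i
          = A (((![0, x 1, 0, x 3] : Fin 4 → ℝ) + x 2 • ![0,0,1,0]) + x 0 • ![1,0,0,0]) i := by
            rw [← hx]
        _ = A ((![0, x 1, 0, x 3] : Fin 4 → ℝ) + x 2 • ![0,0,1,0]) i :=
            const_along' _ (hdAi i) _ hw0 _ _
        _ = A ![0, x 1, 0, x 3] i := const_along' _ (hdAi i) _ hw2 _ _
    -- derivative facts along direction (0,1,0,1)
    have hsum : ∀ (i : Fin 4) (y : Fin 4 → ℝ),
        (∑ j, (![0,1,0,1] : Fin 4 → ℝ) j * pd j (fun z => A z i) y)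
          = pd 1 (fun z => A z i) y + pd 3 (fun z => A z i) y := by
      intro i y; rw [Fin.sum_univ_four]; simp
    have hF : ∀ (p : Fin 4 → ℝ) (t : ℝ),
        HasDerivAt (fun s => A (p + s • ![0,1,0,1]) 0)
          (A (p + t • ![0,1,0,1]) 2 / l) t := by
      intro p t
      have h := hasDerivAt_line' (fun y => A y 0) (hdAi 0) p ![0,1,0,1] t
      rw [hsum] at h
      have hv : pd 1 (fun z => A z 0) (p + t • ![0,1,0,1])
          + pd 3 (fun z => A z 0) (p + t • ![0,1,0,1])
          = A (p + t • ![0,1,0,1]) 2 / l := by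
        have := key0 (p + t • ![0,1,0,1]); rw [eq_div_iff hl]; linarith
      rwa [hv] at h
    have hG : ∀ (p : Fin 4 → ℝ) (t : ℝ),
        HasDerivAt (fun s => A (p + s • ![0,1,0,1]) 2)
          (-A (p + t • ![0,1,0,1]) 0 / l) t := by
      intro p t
      have h := hasDerivAt_line' (fun y => A y 2) (hdAi 2) p ![0,1,0,1] t
      rw [hsum] at h
      have hv : pd 1 (fun z => A z 2) (p + t • ![0,1,0,1])
          + pd 3 (fun z => A z 2) (p + t • ![0,1,0,1])
          = -A (p + t • ![0,1,0,1]) 0 / l := by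
        have := key2 (p + t • ![0,1,0,1]); rw [eq_div_iff hl]; linarith
      rwa [hv] at h
    -- the two conserved combinations along the direction (0,1,0,1)
    have hK1 : ∀ (p : Fin 4 → ℝ) (t : ℝ),
        A (p + t • ![0,1,0,1]) 0 * sin (t / l) + A (p + t • ![0,1,0,1]) 2 * cos (t / l)
          = A p 0 * sin 0 + A p 2 * cos 0 := by
      intro p t
      have hD : ∀ s : ℝ, HasDerivAt (fun t : ℝ =>
          A (p + t • ![0,1,0,1]) 0 * sin (t / l) + A (p + t • ![0,1,0,1]) 2 * cos (t / l)) 0 s := by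
        intro s
        have hds : HasDerivAt (fun t : ℝ => sin (t / l)) (cos (s / l) * (1 / l)) s := by
          have h1 : HasDerivAt (fun t : ℝ => t / l) (1 / l) s := by
            simpa using (hasDerivAt_id s).div_const l
          exact (Real.hasDerivAt_sin (s / l)).comp s h1
        have hdc : HasDerivAt (fun t : ℝ => cos (t / l)) (-sin (s / l) * (1 / l)) s := by
          have h1 : HasDerivAt (fun t : ℝ => t / l) (1 / l) s := by
            simpa using (hasDerivAt_id s).div_const l
          exact (Real.hasDerivAt_cos (s / l)).comp s h1
        have h3 := ((hF p s).fun_mul hds).fun_add ((hG p s).fun_mul hdc)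
        refine h3.congr_deriv ?_
        ring
      have hconst := is_const_of_deriv_eq_zero
        (fun s => (hD s).differentiableAt) (fun s => (hD s).deriv) t 0
      simpa using hconst
    have hK2 : ∀ (p : Fin 4 → ℝ) (t : ℝ),
        A (p + t • ![0,1,0,1]) 0 * cos (t / l) - A (p + t • ![0,1,0,1]) 2 * sin (t / l)
          = A p 0 * cos 0 - A p 2 * sin 0 := by
      intro p t
      have hD : ∀ s : ℝ, HasDerivAt (fun t : ℝ =>
          A (p + t • ![0,1,0,1]) 0 * cos (t / l) - A (p + t • ![0,1,0,1]) 2 * sin (t / l)) 0 s := by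
        intro s
        have hds : HasDerivAt (fun t : ℝ => sin (t / l)) (cos (s / l) * (1 / l)) s := by
          have h1 : HasDerivAt (fun t : ℝ => t / l) (1 / l) s := by
            simpa using (hasDerivAt_id s).div_const l
          exact (Real.hasDerivAt_sin (s / l)).comp s h1
        have hdc : HasDerivAt (fun t : ℝ => cos (t / l)) (-sin (s / l) * (1 / l)) s := by
          have h1 : HasDerivAt (fun t : ℝ => t / l) (1 / l) s := by
            simpa using (hasDerivAt_id s).div_const l
          exact (Real.hasDerivAt_cos (s / l)).comp s h1
        have h3 := ((hF p s).fun_mul hdc).fun_sub ((hG p s).fun_mul hds)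
        refine h3.congr_deriv ?_
        ring
      have hconst := is_const_of_deriv_eq_zero
        (fun s => (hD s).differentiableAt) (fun s => (hD s).deriv) t 0
      simpa using hconst
    -- constancy of components 1 and 3 along the direction
    have hK13 : ∀ (i : Fin 4), (pd 1 (fun z => A z i) = fun y => - pd 3 (fun z => A z i) y) →
        True := fun _ _ => trivial
    have htr13 : ∀ (i : Fin 4), (∀ y, pd 1 (fun z => A z i) y + pd 3 (fun z => A z i) y = 0) →
        ∀ (p : Fin 4 → ℝ) (t : ℝ), A (p + t • ![0,1,0,1]) i = A p i := by
      intro i hi p t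
      have hw : ∀ y, ∑ j, (![0,1,0,1] : Fin 4 → ℝ) j * pd j (fun z => A z i) y = 0 := by
        intro y; rw [hsum]; exact hi y
      exact const_along' _ (hdAi i) _ hw p t
    -- now define the functions
    refine ⟨fun v => A ![0, v/2, 0, -(v/2)] 2, fun v => A ![0, v/2, 0, -(v/2)] 0,
      fun v => A ![0, v/2, 0, -(v/2)] 1, fun v => A ![0, v/2, 0, -(v/2)] 3, ?_, ?_, ?_, ?_, ?_⟩
    case _ => exact (contDiff_pi.mp (hA.comp (by
        apply contDiff_pi.mpr; intro j; fin_cases j <;> simp <;> first | exact contDiff_const | exact contDiff_id.div_const 2 | exact (contDiff_id.div_const 2).neg))) 2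
    case _ => exact (contDiff_pi.mp (hA.comp (by
        apply contDiff_pi.mpr; intro j; fin_cases j <;> simp <;> first | exact contDiff_const | exact contDiff_id.div_const 2 | exact (contDiff_id.div_const 2).neg))) 0
    case _ => exact (contDiff_pi.mp (hA.comp (by
        apply contDiff_pi.mpr; intro j; fin_cases j <;> simp <;> first | exact contDiff_const | exact contDiff_id.div_const 2 | exact (contDiff_id.div_const 2).neg))) 1
    case _ => exact (contDiff_pi.mp (hA.comp (by
        apply contDiff_pi.mpr; intro j; fin_cases j <;> simp <;> first | exact contDiff_const | exact contDiff_id.div_const 2 | exact (contDiff_id.div_const 2).neg))) 3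
    intro x
    set v : ℝ := x 1 - x 3 with hv
    set u : ℝ := x 1 + x 3 with hu
    have hq : (![0, x 1, 0, x 3] : Fin 4 → ℝ)
        = (![0, v/2, 0, -(v/2)] : Fin 4 → ℝ) + (u/2) • ![0,1,0,1] := by
      funext j; fin_cases j <;> simp [hv, hu] <;> ring
    have hs : (u/2) / l = u / (2 * l) := by rw [div_div]
    have E1 := hK1 ![0, v/2, 0, -(v/2)] (u/2)
    have E2 := hK2 ![0, v/2, 0, -(v/2)] (u/2)
    rw [← hq, hs] at E1 E2
    simp only [Real.sin_zero, Real.cos_zero, mul_zero, mul_one, zero_add, sub_zero] at E1 E2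
    have T0 := trans x 0
    have T1 := trans x 1
    have T2 := trans x 2
    have T3 := trans x 3
    have E3 : A ![0, x 1, 0, x 3] 1 = A ![0, v/2, 0, -(v/2)] 1 := by
      have := htr13 1 key1 ![0, v/2, 0, -(v/2)] (u/2); rw [← hq] at this; exact this
    have E4 : A ![0, x 1, 0, x 3] 3 = A ![0, v/2, 0, -(v/2)] 3 := by
      have := htr13 3 key3 ![0, v/2, 0, -(v/2)] (u/2); rw [← hq] at this; exact this
    have hpy := sin_sq_add_cos_sq (u / (2 * l))
    refine ⟨?_, ?_, ?_, ?_⟩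
    · show A x 0 = A ![0, v/2, 0, -(v/2)] 2 * sin (u / (2 * l))
          + A ![0, v/2, 0, -(v/2)] 0 * cos (u / (2 * l))
      rw [T0, ← E1, ← E2]
      linear_combination (-(A ![0, x 1, 0, x 3] 0)) * hpy
    · show A x 2 = A ![0, v/2, 0, -(v/2)] 2 * cos (u / (2 * l))
          - A ![0, v/2, 0, -(v/2)] 0 * sin (u / (2 * l))
      rw [T2, ← E1, ← E2]
      linear_combination (-(A ![0, x 1, 0, x 3] 2)) * hpy
    · show A x 1 = A ![0, v/2, 0, -(v/2)] 1
      rw [T1, E3]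
    · show A x 3 = A ![0, v/2, 0, -(v/2)] 3
      rw [T3, E4]
  · rintro ⟨C1, C2, f, g, hC1, hC2, hf, hg, hform⟩
    have hdC1 : Differentiable ℝ C1 := hC1.differentiable one_ne_zero
    have hdC2 : Differentiable ℝ C2 := hC2.differentiable one_ne_zero
    have hdf : Differentiable ℝ f := hf.differentiable one_ne_zero
    have hdg : Differentiable ℝ g := hg.differentiable one_ne_zero
    have hA0 : (fun y => A y 0) = fun y => C1 (y 1 - y 3) * sin ((y 1 + y 3) / (2 * l))
        + C2 (y 1 - y 3) * cos ((y 1 + y 3) / (2 * l)) := funext fun y => (hform y).1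
    have hA2 : (fun y => A y 2) = fun y => C1 (y 1 - y 3) * cos ((y 1 + y 3) / (2 * l))
        - C2 (y 1 - y 3) * sin ((y 1 + y 3) / (2 * l)) := funext fun y => (hform y).2.1
    have hA1 : (fun y => A y 1) = fun y => f (y 1 - y 3) := funext fun y => (hform y).2.2.1
    have hA3 : (fun y => A y 3) = fun y => g (y 1 - y 3) := funext fun y => (hform y).2.2.2
    have d1 : ∀ x, DifferentiableAt ℝ
        (fun y : Fin 4 → ℝ => C1 (y 1 - y 3) * Real.sin ((y 1 + y 3) / (2 * l))) x := fun x =>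
      ((hasFDerivAt_vpart C1 hdC1 x).mul
        (hasFDerivAt_upart Real.sin Real.differentiable_sin (2*l) x)).differentiableAt
    have d2 : ∀ x, DifferentiableAt ℝ
        (fun y : Fin 4 → ℝ => C2 (y 1 - y 3) * Real.cos ((y 1 + y 3) / (2 * l))) x := fun x =>
      ((hasFDerivAt_vpart C2 hdC2 x).mul
        (hasFDerivAt_upart Real.cos Real.differentiable_cos (2*l) x)).differentiableAt
    have d3 : ∀ x, DifferentiableAt ℝ
        (fun y : Fin 4 → ℝ => C1 (y 1 - y 3) * Real.cos ((y 1 + y 3) / (2 * l))) x := fun x =>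
      ((hasFDerivAt_vpart C1 hdC1 x).mul
        (hasFDerivAt_upart Real.cos Real.differentiable_cos (2*l) x)).differentiableAt
    have d4 : ∀ x, DifferentiableAt ℝ
        (fun y : Fin 4 → ℝ => C2 (y 1 - y 3) * Real.sin ((y 1 + y 3) / (2 * l))) x := fun x =>
      ((hasFDerivAt_vpart C2 hdC2 x).mul
        (hasFDerivAt_upart Real.sin Real.differentiable_sin (2*l) x)).differentiableAt
    have pdA0 : ∀ (j : Fin 4) (x : Fin 4 → ℝ), pd j (fun y => A y 0) x =
        ((if (1:Fin 4) = j then 1 else 0) - (if (3:Fin 4) = j then 1 else 0))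
          * (deriv C1 (x 1 - x 3) * sin ((x 1 + x 3) / (2 * l))
            + deriv C2 (x 1 - x 3) * cos ((x 1 + x 3) / (2 * l)))
        + ((if (1:Fin 4) = j then 1 else 0) + (if (3:Fin 4) = j then 1 else 0))
          * ((C1 (x 1 - x 3) * cos ((x 1 + x 3) / (2 * l))
            - C2 (x 1 - x 3) * sin ((x 1 + x 3) / (2 * l))) * (1 / (2 * l))) := by
      intro j x
      rw [hA0, pd_add' _ _ j x (d1 x) (d2 x),
        pd_shape C1 Real.sin hdC1 Real.differentiable_sin (2*l) j x,
        pd_shape C2 Real.cos hdC2 Real.differentiable_cos (2*l) j x,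
        Real.deriv_sin, Real.deriv_cos]
      ring
    have pdA2 : ∀ (j : Fin 4) (x : Fin 4 → ℝ), pd j (fun y => A y 2) x =
        ((if (1:Fin 4) = j then 1 else 0) - (if (3:Fin 4) = j then 1 else 0))
          * (deriv C1 (x 1 - x 3) * cos ((x 1 + x 3) / (2 * l))
            - deriv C2 (x 1 - x 3) * sin ((x 1 + x 3) / (2 * l)))
        + ((if (1:Fin 4) = j then 1 else 0) + (if (3:Fin 4) = j then 1 else 0))
          * ((-(C1 (x 1 - x 3) * sin ((x 1 + x 3) / (2 * l)))
            - C2 (x 1 - x 3) * cos ((x 1 + x 3) / (2 * l))) * (1 / (2 * l))) := by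
      intro j x
      rw [hA2, pd_sub' _ _ j x (d3 x) (d4 x),
        pd_shape C1 Real.cos hdC1 Real.differentiable_cos (2*l) j x,
        pd_shape C2 Real.sin hdC2 Real.differentiable_sin (2*l) j x,
        Real.deriv_sin, Real.deriv_cos]
      ring
    have pdA1 : ∀ (j : Fin 4) (x : Fin 4 → ℝ), pd j (fun y => A y 1) x =
        ((if (1:Fin 4) = j then 1 else 0) - (if (3:Fin 4) = j then 1 else 0))
          * deriv f (x 1 - x 3) := by
      intro j x
      rw [hA1, pd_vshape f hdf j x]
    have pdA3 : ∀ (j : Fin 4) (x : Fin 4 → ℝ), pd j (fun y => A y 3) x =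
        ((if (1:Fin 4) = j then 1 else 0) - (if (3:Fin 4) = j then 1 else 0))
          * deriv g (x 1 - x 3) := by
      intro j x
      rw [hA3, pd_vshape g hdg j x]
    refine ⟨?_, ?_, ?_⟩
    · intro x i
      fin_cases i <;>
        simp [lieCov, e1, Fin.sum_univ_four, pd_const', pdA0, pdA1, pdA2, pdA3]
    · intro x i
      fin_cases i <;>
        simp [lieCov, e3, Fin.sum_univ_four, pd_const', pdA0, pdA1, pdA2, pdA3]
    · intro x i
      fin_cases i
      all_goals simp [lieCov, Fin.sum_univ_four, pd_const', pd_proj', pd_neg_proj',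
        pdA0, pdA1, pdA2, pdA3, (hform x).1, (hform x).2.1]
      all_goals try (field_simp; ring)
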